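/- Let A be a modal algebra such that □x ≤ □□x holds for every x ∈ A. If the non-compactness rule is true at A, then □(□x ⇨ x) ≤ □x holds for every x ∈ A (equivalently, □(□x ⇨ x) ⇨ □x = ⊤ for every x), where a ⇨ b denotes the Boolean implication ¬a ⊔ b. -/

import Mathlib

/-- Modal formulas over a countable set of propositional variables. -/
inductive Fml : Type where
  | prop : ℕ → Fml
  | top : Fml
  | and : Fml → Fml → Fml
  | neg : Fml → Fml
  | box : Fml → Fml

namespace Fml
/-- `⊥` abbreviates `¬⊤`. -/
def bot : Fml := neg top
/-- `φ ∨ ψ` abbreviates `¬(¬φ ∧ ¬ψ)`. -/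
def or (φ ψ : Fml) : Fml := neg (and (neg φ) (neg ψ))
/-- `φ ⊃ ψ` abbreviates `¬(φ ∧ ¬ψ)`. -/
def imp (φ ψ : Fml) : Fml := neg (and φ (neg ψ))
/-- `◇φ` abbreviates `¬□¬φ`. -/
def dia (φ : Fml) : Fml := neg (box (neg φ))
/-- `◇ⁿφ`: n-fold application of `◇`. -/
def dian : ℕ → Fml → Fml
  | 0, φ => φ
  | n+1, φ => dia (dian n φ)
end Fml

/-- Valuation of modal formulas in a modal algebra. -/
def aval {A : Type} [BooleanAlgebra A] (box : A → A) (v : ℕ → A) : Fml → A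
  | .prop n => v n
  | .top => ⊤
  | .and φ ψ => aval box v φ ⊓ aval box v ψ
  | .neg φ => (aval box v φ)ᶜ
  | .box φ => box (aval box v φ)

/-- A formula is true at a modal algebra if it evaluates to `⊤` under every valuation. -/
def ATrue {A : Type} [BooleanAlgebra A] (box : A → A) (φ : Fml) : Prop :=
  ∀ v : ℕ → A, aval box v φ = ⊤

/-- The non-compactness rule is true at a modal algebra: for every formula `φ`,
if `φ ⊃ ◇ⁿ⊤` is true at the algebra for every `n`, then `φ ⊃ ⊥` is true at it. -/
def NCRule {A : Type} [BooleanAlgebra A] (box : A → A) : Prop :=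
  ∀ φ : Fml, (∀ n : ℕ, ATrue box (Fml.imp φ (Fml.dian n Fml.top))) →
    ATrue box (Fml.imp φ Fml.bot)

/-!
Put `c := □(□x ⇨ x) ⊓ ¬□x`. Transitivity gives `□(□x ⇨ x) ≤ □□(□x ⇨ x)`, and from this the
Löb-style computation `□(□x ⇨ x) ⊓ □¬c ≤ □x` follows, i.e. `c ≤ ◇c`. Since `◇` is monotone,
`c ≤ ◇ⁿc ≤ ◇ⁿ⊤` for every `n`, so the non-compactness rule applied to the formula
`□(□p ⇨ p) ∧ ¬□p` forces `c = ⊥`, which is the claim.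
-/

section ModalAlgebra

variable {A : Type} [BooleanAlgebra A] {box : A → A}

def diamond (box : A → A) (a : A) : A := (box aᶜ)ᶜ

theorem monotone_of_map_inf (hbox_inf : ∀ x y : A, box (x ⊓ y) = box x ⊓ box y) :
    Monotone box := fun a b hab => by
  rw [← inf_eq_left.2 hab, hbox_inf]
  exact inf_le_right

theorem monotone_diamond (hbox_inf : ∀ x y : A, box (x ⊓ y) = box x ⊓ box y) :
    Monotone (diamond box) := fun _ _ hab =>
  compl_le_compl (monotone_of_map_inf hbox_inf (compl_le_compl hab))

theorem box_himp_box_inf_box_le (hbox_inf : ∀ x y : A, box (x ⊓ y) = box x ⊓ box y)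
    (htrans : ∀ x : A, box x ≤ box (box x)) (x : A) :
    box (box x ⇨ x) ⊓ box (box (box x ⇨ x) ⇨ box x) ≤ box x := by
  set b := box (box x ⇨ x)
  have hmono := monotone_of_map_inf hbox_inf
  calc b ⊓ box (b ⇨ box x)
      ≤ b ⊓ (box b ⊓ box (b ⇨ box x)) := le_inf inf_le_left (inf_le_inf_right _ (htrans _))
    _ = b ⊓ box (b ⊓ box x) := by rw [← hbox_inf, inf_himp]
    _ ≤ b ⊓ box (box x) := inf_le_inf_left _ (hmono inf_le_right)
    _ = box (box x ⊓ x) := by rw [← hbox_inf, inf_comm, inf_himp]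
    _ ≤ box x := hmono inf_le_right

theorem le_diamond_box_himp_inf_compl_box (hbox_inf : ∀ x y : A, box (x ⊓ y) = box x ⊓ box y)
    (htrans : ∀ x : A, box x ≤ box (box x)) (x : A) :
    box (box x ⇨ x) ⊓ (box x)ᶜ ≤ diamond box (box (box x ⇨ x) ⊓ (box x)ᶜ) := by
  rw [diamond, le_compl_iff_disjoint_right, disjoint_iff, compl_inf, compl_compl, sup_comm,
    ← himp_eq]
  apply le_bot_iff.1
  calc box (box x ⇨ x) ⊓ (box x)ᶜ ⊓ box (box (box x ⇨ x) ⇨ box x)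
      ≤ box x ⊓ (box x)ᶜ :=
        le_inf ((inf_le_inf_right _ inf_le_left).trans (box_himp_box_inf_box_le hbox_inf htrans x))
          (inf_le_left.trans inf_le_right)
    _ = ⊥ := inf_compl_eq_bot

theorem le_diamond_iterate_top_of_le_diamond
    (hbox_inf : ∀ x y : A, box (x ⊓ y) = box x ⊓ box y) {c : A} (hc : c ≤ diamond box c)
    (n : ℕ) : c ≤ (diamond box)^[n] ⊤ :=
  calc c = (diamond box)^[0] c := rfl
    _ ≤ (diamond box)^[n] c :=
      (monotone_diamond hbox_inf).monotone_iterate_of_le_map hc (Nat.zero_le n)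
    _ ≤ (diamond box)^[n] ⊤ := ((monotone_diamond hbox_inf).iterate n) le_top

end ModalAlgebra

section Semantics

variable {A : Type} [BooleanAlgebra A] {box : A → A}

theorem aval_imp (v : ℕ → A) (φ ψ : Fml) :
    aval box v (Fml.imp φ ψ) = aval box v φ ⇨ aval box v ψ := by
  simp only [Fml.imp, aval, compl_inf, compl_compl, himp_eq, sup_comm]

theorem aval_dian_top (v : ℕ → A) (n : ℕ) :
    aval box v (Fml.dian n Fml.top) = (diamond box)^[n] ⊤ := by
  induction n with
  | zero => rfl
  | succ n ih =>
    rw [Function.iterate_succ_apply', ← ih]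
    rfl

theorem aTrue_imp_iff (φ ψ : Fml) :
    ATrue box (Fml.imp φ ψ) ↔ ∀ v : ℕ → A, aval box v φ ≤ aval box v ψ := by
  simp only [ATrue, aval_imp, himp_eq_top_iff]

theorem NCRule.aval_eq_bot (hnc : NCRule box) {φ : Fml}
    (hφ : ∀ (v : ℕ → A) (n : ℕ), aval box v φ ≤ (diamond box)^[n] ⊤) (v : ℕ → A) :
    aval box v φ = ⊥ := by
  have hprem (n : ℕ) : ATrue box (Fml.imp φ (Fml.dian n Fml.top)) :=
    (aTrue_imp_iff _ _).2 fun v => (aval_dian_top v n).symm ▸ hφ v n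
  have hφbot := (aTrue_imp_iff _ _).1 (hnc φ hprem) v
  rwa [Fml.bot, aval, aval, compl_top, le_bot_iff] at hφbot

end Semantics

theorem stmt8_general {A : Type} [BooleanAlgebra A] (box : A → A)
    (hbox_inf : ∀ x y : A, box (x ⊓ y) = box x ⊓ box y)
    (htrans : ∀ x : A, box x ≤ box (box x)) (hnc : NCRule box) :
    ∀ x : A, box (box x ⇨ x) ≤ box x := by
  intro x
  let p : Fml := .prop 0
  have hval (v : ℕ → A) :
      aval box v (.and (.box (.imp (.box p) p)) (.neg (.box p))) =
        box (box (v 0) ⇨ v 0) ⊓ (box (v 0))ᶜ := by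
    simp only [aval, aval_imp, p]
  have hbot := hnc.aval_eq_bot (fun v n => (hval v).symm ▸
    le_diamond_iterate_top_of_le_diamond hbox_inf
      (le_diamond_box_himp_inf_compl_box hbox_inf htrans (v 0)) n) fun _ => x
  rwa [hval, ← disjoint_iff, disjoint_compl_right_iff] at hbot

theorem stmt8 {A : Type} [BooleanAlgebra A] (box : A → A)
    (hbox_top : box ⊤ = ⊤) (hbox_inf : ∀ x y : A, box (x ⊓ y) = box x ⊓ box y)
    (htrans : ∀ x : A, box x ≤ box (box x)) (hnc : NCRule box) :
    ∀ x : A, box (box x ⇨ x) ≤ box x :=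
  stmt8_general box hbox_inf htrans hnc
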